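/- For the ensemble ẋ^θ = A^θ x^θ + b₁u₁ + b₂u₂ on Θ = [θ_min, θ_max] with A^θ = [[0,1],[θ,0]], the reachability subspace condition for approximate controllability in C⁰(Θ,ℝ²) holds: the closure in the C⁰ norm of span{𝒜^r[𝔟₁], 𝒜^r[𝔟₂] : r ≥ 0} equals C⁰(Θ,ℝ²), where 𝒜 : C⁰(Θ,ℝ²) → C⁰(Θ,ℝ²) is 𝒜[Y](θ) = A^θ Y(θ) and 𝔟₁(θ) ≡ b₁ = (1,0)ᵀ, 𝔟₂(θ) ≡ b₂ = (0,1)ᵀ. -/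

import Mathlib

open MeasureTheory Set Filter Topology

noncomputable section

/-- The operator `𝒜 : C⁰(Θ,ℝ²) → C⁰(Θ,ℝ²)`, `𝒜[Y](θ) = A^θ Y(θ)` with
`A^θ = [[0,1],[θ,0]]`, acting on (not necessarily continuous) functions. -/
def Aop (θmin θmax : ℝ) (Y : Icc θmin θmax → EuclideanSpace ℝ (Fin 2)) :
    Icc θmin θmax → EuclideanSpace ℝ (Fin 2) :=
  fun θ => (WithLp.equiv 2 (Fin 2 → ℝ)).symm ![Y θ 1, (θ : ℝ) * Y θ 0]

/-- The constant functions `𝔟₁(θ) ≡ (1,0)ᵀ` and `𝔟₂(θ) ≡ (0,1)ᵀ`. -/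
def bconst (θmin θmax : ℝ) (i : Fin 2) : Icc θmin θmax → EuclideanSpace ℝ (Fin 2) :=
  fun _ => EuclideanSpace.single i 1

/-!
Since `(A^θ)² = θ • 1`, the iterates `𝒜^(2k)[𝔟ᵢ]` are the monomials `θ ↦ θ^k eᵢ`, so the span
contains every `θ ↦ p(θ) eᵢ` with `p` a polynomial. Approximating each coordinate of `Y`
uniformly by such a polynomial (Weierstrass) gives the approximation of `Y`.
-/

open Polynomial

theorem exists_polynomials_near_euclidean {ι : Type*} [Fintype ι] [DecidableEq ι] {a b : ℝ}
    (Y : Icc a b → EuclideanSpace ℝ ι) (hY : Continuous Y) {ε : ℝ} (hε : 0 < ε) :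
    ∃ p : ι → ℝ[X], ∀ θ : Icc a b,
      ‖Y θ - ∑ i, (p i).eval (θ : ℝ) • EuclideanSpace.single i (1 : ℝ)‖ ≤ ε := by
  have hδ : 0 < ε / (Fintype.card ι + 1) := by positivity
  choose p hp using fun i => exists_polynomial_near_continuousMap a b
    ⟨fun θ => Y θ i, by fun_prop⟩ _ hδ
  refine ⟨p, fun θ => ?_⟩
  have hcomp (i : ι) : ‖Y θ i - (p i).eval (θ : ℝ)‖ ≤ ε / (Fintype.card ι + 1) := by
    rw [norm_sub_rev]
    exact (ContinuousMap.norm_coe_le_norm _ θ).trans (hp i).le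
  conv_lhs => rw [← (EuclideanSpace.basisFun ι ℝ).sum_repr (Y θ)]
  simp only [EuclideanSpace.basisFun_apply, EuclideanSpace.basisFun_repr, ← Finset.sum_sub_distrib,
    ← sub_smul]
  calc ‖∑ i, (Y θ i - (p i).eval (θ : ℝ)) • EuclideanSpace.single i (1 : ℝ)‖
      ≤ ∑ i, ‖Y θ i - (p i).eval (θ : ℝ)‖ := by
        refine (norm_sum_le _ _).trans (Finset.sum_le_sum fun i _ => ?_)
        simp [norm_smul]
    _ ≤ Fintype.card ι * (ε / (Fintype.card ι + 1)) := by
        simpa using Finset.sum_le_sum fun i (_ : i ∈ Finset.univ) => hcomp i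
    _ ≤ ε := by
        rw [mul_div_assoc', div_le_iff₀ (by positivity)]
        nlinarith

section Monomials

variable (θmin θmax : ℝ)

def monomialFn (i : Fin 2) (k : ℕ) : Icc θmin θmax → EuclideanSpace ℝ (Fin 2) :=
  fun θ => ((θ : ℝ) ^ k) • EuclideanSpace.single i 1

theorem Aop_monomialFn_zero (k : ℕ) :
    Aop θmin θmax (monomialFn θmin θmax 0 k) = monomialFn θmin θmax 1 (k + 1) := by
  funext θ
  ext j
  fin_cases j <;> simp [Aop, monomialFn, pow_succ, mul_comm]

theorem Aop_monomialFn_one (k : ℕ) :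
    Aop θmin θmax (monomialFn θmin θmax 1 k) = monomialFn θmin θmax 0 k := by
  funext θ
  ext j
  fin_cases j <;> simp [Aop, monomialFn]

theorem Aop_iterate_two_monomialFn (i : Fin 2) (k : ℕ) :
    (Aop θmin θmax)^[2] (monomialFn θmin θmax i k) = monomialFn θmin θmax i (k + 1) := by
  fin_cases i <;>
    simp [Aop_monomialFn_zero, Aop_monomialFn_one]

theorem Aop_iterate_bconst (i : Fin 2) (k : ℕ) :
    (Aop θmin θmax)^[2 * k] (bconst θmin θmax i) = monomialFn θmin θmax i k := by
  induction k with
  | zero => funext θ; simp [bconst, monomialFn]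
  | succ k ih =>
    rw [mul_add, mul_one, add_comm, Function.iterate_add_apply, ih,
      Aop_iterate_two_monomialFn]

end Monomials

def reachabilitySpan (θmin θmax : ℝ) : Submodule ℝ (Icc θmin θmax → EuclideanSpace ℝ (Fin 2)) :=
  Submodule.span ℝ
    {f | ∃ r : ℕ, f = (Aop θmin θmax)^[r] (bconst θmin θmax 0) ∨
      f = (Aop θmin θmax)^[r] (bconst θmin θmax 1)}

theorem monomialFn_mem_reachabilitySpan (θmin θmax : ℝ) (i : Fin 2) (k : ℕ) :
    monomialFn θmin θmax i k ∈ reachabilitySpan θmin θmax := by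
  refine Submodule.subset_span ⟨2 * k, ?_⟩
  fin_cases i
  exacts [Or.inl (Aop_iterate_bconst θmin θmax 0 k).symm,
    Or.inr (Aop_iterate_bconst θmin θmax 1 k).symm]

theorem polynomial_smul_single_mem_reachabilitySpan (θmin θmax : ℝ) (i : Fin 2) (p : ℝ[X]) :
    (fun θ : Icc θmin θmax => p.eval (θ : ℝ) • EuclideanSpace.single i (1 : ℝ)) ∈
      reachabilitySpan θmin θmax := by
  induction p using Polynomial.induction_on' with
  | add p q hp hq =>
    simp only [eval_add, add_smul]
    exact Submodule.add_mem _ hp hq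
  | monomial k a =>
    simp only [eval_monomial, mul_smul]
    exact Submodule.smul_mem _ a (monomialFn_mem_reachabilitySpan θmin θmax i k)

theorem reachability_span_dense_general (θmin θmax : ℝ)
    (Y : Icc θmin θmax → EuclideanSpace ℝ (Fin 2)) (hY : Continuous Y) :
    ∀ ε > (0 : ℝ),
      ∃ g ∈ Submodule.span ℝ
          {f : Icc θmin θmax → EuclideanSpace ℝ (Fin 2) |
            ∃ r : ℕ, f = (Aop θmin θmax)^[r] (bconst θmin θmax 0) ∨
              f = (Aop θmin θmax)^[r] (bconst θmin θmax 1)},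
        ∀ θ, ‖Y θ - g θ‖ ≤ ε := by
  intro ε hε
  change ∃ g ∈ reachabilitySpan θmin θmax, ∀ θ, ‖Y θ - g θ‖ ≤ ε
  obtain ⟨p, hp⟩ := exists_polynomials_near_euclidean Y hY hε
  refine ⟨∑ i, fun θ => (p i).eval (θ : ℝ) • EuclideanSpace.single i (1 : ℝ), ?_, ?_⟩
  · exact Submodule.sum_mem _ fun i _ =>
      polynomial_smul_single_mem_reachabilitySpan θmin θmax i (p i)
  · simpa only [Finset.sum_apply] using hp

/-- the reachability subspace condition for approximate controllability
in `C⁰(Θ,ℝ²)`, `Θ = [θ_min,θ_max]`: the `C⁰`-closure of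
`span{𝒜^r[𝔟₁], 𝒜^r[𝔟₂] : r ≥ 0}` equals `C⁰(Θ,ℝ²)`, i.e. every continuous
`Y : Θ → ℝ²` is uniformly approximated by elements of the span. -/
theorem reachability_span_dense (θmin θmax : ℝ) (h : θmin ≤ θmax)
    (Y : Icc θmin θmax → EuclideanSpace ℝ (Fin 2)) (hY : Continuous Y) :
    ∀ ε > (0 : ℝ),
      ∃ g ∈ Submodule.span ℝ
          {f : Icc θmin θmax → EuclideanSpace ℝ (Fin 2) |
            ∃ r : ℕ, f = (Aop θmin θmax)^[r] (bconst θmin θmax 0) ∨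
              f = (Aop θmin θmax)^[r] (bconst θmin θmax 1)},
        ∀ θ, ‖Y θ - g θ‖ ≤ ε :=
  reachability_span_dense_general θmin θmax Y hY
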